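/- In the ℤ_N toric code on the L×L torus, the logical string operators X̄ = ∏_{y ∈ ℤ/L} X_{h((0,y))} (product of shift operators over all horizontal edges in the column x = 0) and Z̄ = ∏_{x ∈ ℤ/L} Z_{h((x,0))} (product of clock operators over all horizontal edges in the row y = 0) commute with every vertex operator A_v and every plaquette operator B_p, and satisfy the Weyl relation Z̄ · X̄ = ω · X̄ · Z̄ with ω = exp(2πi/N). -/

import Mathlib

noncomputable section

open Matrix

/-- Vertices of the `L×L` torus. -/
abbrev TVertex (L : ℕ) : Type := ZMod L × ZMod L

/-- Edges of the `L×L` torus: `(v, false)` is the horizontal edge `h(v)`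
and `(v, true)` is the vertical edge `u(v)`. -/
abbrev TEdge (L : ℕ) : Type := TVertex L × Bool

/-- Edge configurations valued in `ℤ/N`. -/
abbrev TConfig (L N : ℕ) : Type := TEdge L → ZMod N

/-- The root of unity `ω = exp(2πi/N)`. -/
def tcOmega (N : ℕ) : ℂ := Complex.exp (2 * Real.pi * Complex.I / N)

/-- The horizontal edge at vertex `v`. -/
def hEdge (L : ℕ) (v : TVertex L) : TEdge L := (v, false)

/-- The vertical edge at vertex `v`. -/
def uEdge (L : ℕ) (v : TVertex L) : TEdge L := (v, true)

/-- The shift operator `X_e`: `(X_e)_{f,g} = 1` iff `f = g + δ_e`. -/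
def tcX (L N : ℕ) [NeZero L] [NeZero N] (e : TEdge L) :
    Matrix (TConfig L N) (TConfig L N) ℂ :=
  fun f g => if f = g + Pi.single e 1 then 1 else 0

/-- The clock operator `Z_e`: diagonal with entry `ω^{f(e)}` at configuration `f`. -/
def tcZ (L N : ℕ) [NeZero L] [NeZero N] (e : TEdge L) :
    Matrix (TConfig L N) (TConfig L N) ℂ :=
  Matrix.diagonal fun f => tcOmega N ^ (f e).val

/-- The vertex operator `A_v = X_{h(v)}·X_{u(v)}·X_{h(v-(1,0))}†·X_{u(v-(0,1))}†`. -/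
def tcA (L N : ℕ) [NeZero L] [NeZero N] (v : TVertex L) :
    Matrix (TConfig L N) (TConfig L N) ℂ :=
  tcX L N (hEdge L v) * tcX L N (uEdge L v) *
    (tcX L N (hEdge L (v - ((1 : ZMod L), (0 : ZMod L)))))ᴴ *
    (tcX L N (uEdge L (v - ((0 : ZMod L), (1 : ZMod L)))))ᴴ

/-- The plaquette operator `B_p = Z_{h(p)}·Z_{u(p+(1,0))}·Z_{h(p+(0,1))}†·Z_{u(p)}†`. -/
def tcB (L N : ℕ) [NeZero L] [NeZero N] (p : TVertex L) :
    Matrix (TConfig L N) (TConfig L N) ℂ :=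
  tcZ L N (hEdge L p) * tcZ L N (uEdge L (p + ((1 : ZMod L), (0 : ZMod L)))) *
    (tcZ L N (hEdge L (p + ((0 : ZMod L), (1 : ZMod L)))))ᴴ *
    (tcZ L N (uEdge L p))ᴴ

/-- The logical string operator `X̄ = ∏_{y ∈ ℤ/L} X_{h((0,y))}`: the product of the shift
operators over all horizontal edges in the column `x = 0`. -/
def tcXbar (L N : ℕ) [NeZero L] [NeZero N] : Matrix (TConfig L N) (TConfig L N) ℂ :=
  (List.ofFn fun y : Fin L => tcX L N (hEdge L ((0 : ZMod L), (y : ZMod L)))).prod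

/-- The logical string operator `Z̄ = ∏_{x ∈ ℤ/L} Z_{h((x,0))}`: the product of the clock
operators over all horizontal edges in the row `y = 0`. -/
def tcZbar (L N : ℕ) [NeZero L] [NeZero N] : Matrix (TConfig L N) (TConfig L N) ℂ :=
  (List.ofFn fun x : Fin L => tcZ L N (hEdge L ((x : ZMod L), (0 : ZMod L)))).prod

/-! The shift matrices `X(c) : f ↦ f + c` and the clock matrices `Z(w) = diag (f ↦ ω^{w ⬝ f})`
on `ℂ^(E → ℤ/N)` satisfy `Z(w) X(c) = ω^{w ⬝ c} X(c) Z(w)`, and every toric-code operator is one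
of them: `A_v` shifts by the signed star of `v`, `B_p` is the clock matrix of the signed boundary
of `p`, `X̄` shifts by the column string and `Z̄` is the clock matrix of the row string. All the
relations therefore reduce to intersection numbers in `ℤ/N`: the row string meets each star, and
the column string each plaquette boundary, in two edges of opposite sign, while the two strings
cross exactly once. -/

open ZMod

section Shift

variable {G R : Type*} [AddCommGroup G] [DecidableEq G]

def shiftMatrix [Zero R] [One R] (c : G) : Matrix G G R :=
  fun f g => if f = g + c then 1 else 0

variable [Semiring R]

theorem shiftMatrix_zero : (shiftMatrix 0 : Matrix G G R) = 1 := by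
  ext f g
  simp [shiftMatrix, one_apply]

theorem conjTranspose_shiftMatrix [StarRing R] (c : G) :
    (shiftMatrix c : Matrix G G R)ᴴ = shiftMatrix (-c) := by
  ext f g
  simp only [shiftMatrix, conjTranspose_apply, ← sub_eq_add_neg, eq_sub_iff_add_eq, eq_comm]
  split_ifs <;> simp

variable [Fintype G]

theorem shiftMatrix_mul_shiftMatrix (c d : G) :
    (shiftMatrix c * shiftMatrix d : Matrix G G R) = shiftMatrix (c + d) := by
  ext f g
  simp only [shiftMatrix, mul_apply, mul_ite, mul_one, mul_zero, Finset.sum_ite_eq',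
    Finset.mem_univ, if_true, add_comm c d, add_assoc]

theorem diagonal_mul_shiftMatrix (φ : G → R) (c : G) :
    diagonal φ * shiftMatrix c = shiftMatrix c * diagonal fun g => φ (g + c) := by
  ext f g
  by_cases h : f = g + c <;> simp [shiftMatrix, h]

theorem list_prod_ofFn_shiftMatrix {n : ℕ} (c : Fin n → G) :
    (List.ofFn fun i => (shiftMatrix (c i) : Matrix G G R)).prod = shiftMatrix (∑ i, c i) := by
  induction n with
  | zero => simp [shiftMatrix_zero]
  | succ n ih => simp [List.ofFn_succ, ih, Fin.sum_univ_succ, shiftMatrix_mul_shiftMatrix]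

theorem commute_shiftMatrix (c d : G) :
    Commute (shiftMatrix c : Matrix G G R) (shiftMatrix d) := by
  rw [Commute, SemiconjBy, shiftMatrix_mul_shiftMatrix, shiftMatrix_mul_shiftMatrix, add_comm]

end Shift

section Clock

variable {E : Type*} [Fintype E] {N : ℕ} [NeZero N]

def clockMatrix (w : E → ZMod N) : Matrix (E → ZMod N) (E → ZMod N) ℂ :=
  diagonal fun f => stdAddChar (w ⬝ᵥ f)

theorem conjTranspose_clockMatrix (w : E → ZMod N) : (clockMatrix w)ᴴ = clockMatrix (-w) := by
  simp only [clockMatrix, diagonal_conjTranspose, neg_dotProduct, AddChar.map_neg_eq_conj]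
  rfl

variable [DecidableEq E]

theorem clockMatrix_mul_clockMatrix (w w' : E → ZMod N) :
    clockMatrix w * clockMatrix w' = clockMatrix (w + w') := by
  simp only [clockMatrix, diagonal_mul_diagonal, add_dotProduct, AddChar.map_add_eq_mul]

theorem list_prod_ofFn_clockMatrix {n : ℕ} (w : Fin n → E → ZMod N) :
    (List.ofFn fun i => clockMatrix (w i)).prod = clockMatrix (∑ i, w i) := by
  induction n with
  | zero => simp [clockMatrix]
  | succ n ih => simp [List.ofFn_succ, ih, Fin.sum_univ_succ, clockMatrix_mul_clockMatrix]

theorem clockMatrix_mul_shiftMatrix (w c : E → ZMod N) :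
    clockMatrix w * (shiftMatrix c : Matrix _ _ ℂ) =
      stdAddChar (w ⬝ᵥ c) • (shiftMatrix c * clockMatrix w) := by
  rw [clockMatrix, diagonal_mul_shiftMatrix, ← Matrix.mul_smul, ← diagonal_smul]
  simp only [dotProduct_add, AddChar.map_add_eq_mul, mul_comm]
  rfl

theorem commute_clockMatrix_shiftMatrix {w c : E → ZMod N} (h : w ⬝ᵥ c = 0) :
    Commute (clockMatrix w) (shiftMatrix c) := by
  rw [Commute, SemiconjBy, clockMatrix_mul_shiftMatrix, h, AddChar.map_zero_eq_one, one_smul]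

theorem commute_clockMatrix (w w' : E → ZMod N) : Commute (clockMatrix w) (clockMatrix w') := by
  rw [Commute, SemiconjBy, clockMatrix_mul_clockMatrix, clockMatrix_mul_clockMatrix, add_comm]

end Clock

theorem ZMod.sum_fin_natCast {M : Type*} [AddCommMonoid M] {L : ℕ} [NeZero L]
    (F : ZMod L → M) :
    ∑ i : Fin L, F ((i : ℕ) : ZMod L) = ∑ x : ZMod L, F x := by
  have hinj : Function.Injective fun i : Fin L => ((i : ℕ) : ZMod L) := by
    intro i j h
    ext
    simpa [ZMod.val_natCast_of_lt i.isLt, ZMod.val_natCast_of_lt j.isLt] using congrArg ZMod.val h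
  exact Fintype.sum_bijective _ ((Fintype.bijective_iff_injective_and_card _).2
    ⟨hinj, by simp [ZMod.card]⟩) _ F fun _ => rfl

section ToricCode

variable (L N : ℕ)

def vertexStar (v : TVertex L) : TConfig L N :=
  Pi.single (hEdge L v) 1 + Pi.single (uEdge L v) 1 - Pi.single (hEdge L (v - (1, 0))) 1 -
    Pi.single (uEdge L (v - (0, 1))) 1

def plaquetteBoundary (p : TVertex L) : TConfig L N :=
  Pi.single (hEdge L p) 1 + Pi.single (uEdge L (p + (1, 0))) 1 -
    Pi.single (hEdge L (p + (0, 1))) 1 - Pi.single (uEdge L p) 1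

variable [NeZero L]

def columnString : TConfig L N := ∑ y : ZMod L, Pi.single (hEdge L (0, y)) 1

def rowString : TConfig L N := ∑ x : ZMod L, Pi.single (hEdge L (x, 0)) 1

variable {L N}

@[simp]
theorem columnString_hEdge (w : TVertex L) :
    columnString L N (hEdge L w) = if w.1 = 0 then 1 else 0 := by
  by_cases h : w.1 = 0 <;>
    simp [columnString, Finset.sum_apply, Pi.single_apply, hEdge, Prod.ext_iff, h]

@[simp]
theorem columnString_uEdge (w : TVertex L) : columnString L N (uEdge L w) = 0 := by
  simp [columnString, Finset.sum_apply, hEdge, uEdge]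

@[simp]
theorem rowString_hEdge (w : TVertex L) :
    rowString L N (hEdge L w) = if w.2 = 0 then 1 else 0 := by
  by_cases h : w.2 = 0 <;>
    simp [rowString, Finset.sum_apply, Pi.single_apply, hEdge, Prod.ext_iff, h]

@[simp]
theorem rowString_uEdge (w : TVertex L) : rowString L N (uEdge L w) = 0 := by
  simp [rowString, Finset.sum_apply, hEdge, uEdge]

theorem rowString_dotProduct_vertexStar (v : TVertex L) :
    rowString L N ⬝ᵥ vertexStar L N v = 0 := by
  simp [vertexStar, dotProduct_add, dotProduct_sub, dotProduct_single]

theorem plaquetteBoundary_dotProduct_columnString (p : TVertex L) :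
    plaquetteBoundary L N p ⬝ᵥ columnString L N = 0 := by
  rw [dotProduct_comm]
  simp [plaquetteBoundary, dotProduct_add, dotProduct_sub, dotProduct_single]

theorem rowString_dotProduct_columnString : rowString L N ⬝ᵥ columnString L N = 1 := by
  simp [columnString, dotProduct_sum, dotProduct_single]

variable [NeZero N]

theorem stdAddChar_one_eq_tcOmega : stdAddChar (1 : ZMod N) = tcOmega N := by
  simpa [tcOmega] using stdAddChar_coe (N := N) 1

theorem tcOmega_pow_val (a : ZMod N) : tcOmega N ^ a.val = stdAddChar a := by
  rw [← stdAddChar_one_eq_tcOmega, ← AddChar.map_nsmul_eq_pow, nsmul_one, natCast_zmod_val]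

theorem tcX_eq_shiftMatrix (e : TEdge L) : tcX L N e = shiftMatrix (Pi.single e 1) := rfl

theorem tcZ_eq_clockMatrix (e : TEdge L) : tcZ L N e = clockMatrix (Pi.single e 1) := by
  simp only [tcZ, clockMatrix, single_dotProduct, one_mul, tcOmega_pow_val]

theorem tcA_eq_shiftMatrix (v : TVertex L) : tcA L N v = shiftMatrix (vertexStar L N v) := by
  simp only [tcA, tcX_eq_shiftMatrix, conjTranspose_shiftMatrix, shiftMatrix_mul_shiftMatrix,
    vertexStar, sub_eq_add_neg]

theorem tcB_eq_clockMatrix (p : TVertex L) :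
    tcB L N p = clockMatrix (plaquetteBoundary L N p) := by
  simp only [tcB, tcZ_eq_clockMatrix, conjTranspose_clockMatrix, clockMatrix_mul_clockMatrix,
    plaquetteBoundary, sub_eq_add_neg]

theorem tcXbar_eq_shiftMatrix : tcXbar L N = shiftMatrix (columnString L N) :=
  (list_prod_ofFn_shiftMatrix _).trans <| congrArg shiftMatrix <|
    ZMod.sum_fin_natCast fun y => (Pi.single (hEdge L (0, y)) 1 : TConfig L N)

theorem tcZbar_eq_clockMatrix : tcZbar L N = clockMatrix (rowString L N) := by
  simp only [tcZbar, tcZ_eq_clockMatrix, list_prod_ofFn_clockMatrix]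
  exact congrArg clockMatrix <|
    ZMod.sum_fin_natCast fun x => (Pi.single (hEdge L (x, 0)) 1 : TConfig L N)

end ToricCode

theorem toric_code_logical_operators_general (L N : ℕ) [NeZero L] [NeZero N] :
    (∀ v : TVertex L, tcXbar L N * tcA L N v = tcA L N v * tcXbar L N) ∧
    (∀ p : TVertex L, tcXbar L N * tcB L N p = tcB L N p * tcXbar L N) ∧
    (∀ v : TVertex L, tcZbar L N * tcA L N v = tcA L N v * tcZbar L N) ∧
    (∀ p : TVertex L, tcZbar L N * tcB L N p = tcB L N p * tcZbar L N) ∧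
    tcZbar L N * tcXbar L N = tcOmega N • (tcXbar L N * tcZbar L N) := by
  simp only [tcXbar_eq_shiftMatrix, tcZbar_eq_clockMatrix, tcA_eq_shiftMatrix,
    tcB_eq_clockMatrix]
  refine ⟨fun v => ?_, fun p => ?_, fun v => ?_, fun p => ?_, ?_⟩
  · exact (commute_shiftMatrix _ _).eq
  · exact (commute_clockMatrix_shiftMatrix (plaquetteBoundary_dotProduct_columnString p)).symm.eq
  · exact (commute_clockMatrix_shiftMatrix (rowString_dotProduct_vertexStar v)).eq
  · exact (commute_clockMatrix _ _).eq
  · rw [clockMatrix_mul_shiftMatrix, rowString_dotProduct_columnString, stdAddChar_one_eq_tcOmega]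

/-- The logical string operators `X̄` and `Z̄` of the `ℤ_N` toric code on the `L×L` torus
commute with all vertex and plaquette operators, and satisfy the Weyl relation
`Z̄·X̄ = ω·X̄·Z̄` with `ω = exp(2πi/N)`. -/
theorem toric_code_logical_operators (L N : ℕ) [NeZero L] [NeZero N]
    (hL : 2 ≤ L) (hN : 1 ≤ N) :
    (∀ v : TVertex L, tcXbar L N * tcA L N v = tcA L N v * tcXbar L N) ∧
    (∀ p : TVertex L, tcXbar L N * tcB L N p = tcB L N p * tcXbar L N) ∧
    (∀ v : TVertex L, tcZbar L N * tcA L N v = tcA L N v * tcZbar L N) ∧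
    (∀ p : TVertex L, tcZbar L N * tcB L N p = tcB L N p * tcZbar L N) ∧
    tcZbar L N * tcXbar L N = tcOmega N • (tcXbar L N * tcZbar L N) :=
  toric_code_logical_operators_general L N
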